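/- Let (A,B,R,σ) be a normalized context and suppose the concept lattice M has a decomposition into independent blocks {K_μ}_{μ∈Λ}, with associated sets A_μ = {a∈A : ⟨φ_{a,x}↓, φ_{a,x}↓↑⟩ ∈ K_μ∖{⟨g_⊤,f_⊥⟩, ⟨g_⊥,f_⊤⟩} for some x∈L} and B_μ = {b∈B : ⟨φ_{b,y}↑↓, φ_{b,y}↑⟩ ∈ K_μ∖{⟨g_⊤,f_⊥⟩, ⟨g_⊥,f_⊤⟩} for some y∈L}. Then for every μ∈Λ, the pair (A_μ, B_μ) is a separable subcontext of (A,B,R,σ). -/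

import Mathlib

/-- A multi-adjoint frame together with a formal context `(A, B, R, σ)`.
`conj i`, `limp i`, `rimp i` form an adjoint triple on the complete lattice `L` for each
index `i : I`, and each conjunctor satisfies the boundary condition
`x & ⊤ = ⊤ & x = x`. -/
structure FCAContext (L : Type*) [CompleteLattice L] (I A B : Type*) where
  conj : I → L → L → L
  limp : I → L → L → L
  rimp : I → L → L → L
  R : A → B → L
  sig : A → B → I
  adjoint_left : ∀ i x y z, x ≤ limp i z y ↔ conj i x y ≤ z
  adjoint_right : ∀ i x y z, conj i x y ≤ z ↔ y ≤ rimp i z x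
  boundary_left : ∀ i x, conj i ⊤ x = x
  boundary_right : ∀ i x, conj i x ⊤ = x

namespace FCAContext

variable {L I A B : Type*} [CompleteLattice L]

open Classical in
/-- The fuzzy-attribute `φ_{a,x}`. -/
noncomputable def phiA (a : A) (x : L) : A → L :=
  fun a' => if a' = a then x else ⊥

open Classical in
/-- The fuzzy-object `φ_{b,y}`. -/
noncomputable def phiB (b : B) (y : L) : B → L :=
  fun b' => if b' = b then y else ⊥

/-- The pair `⟨g_⊤, f_⊥⟩` (the top of the concept lattice of a normalized context). -/
def topC : (B → L) × (A → L) := (fun _ => (⊤ : L), fun _ => (⊥ : L))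

/-- The pair `⟨g_⊥, f_⊤⟩` (the bottom of the concept lattice of a normalized context). -/
def botC : (B → L) × (A → L) := (fun _ => (⊥ : L), fun _ => (⊤ : L))

/-- The order on concepts: `⟨g₁,f₁⟩ ⪯ ⟨g₂,f₂⟩ iff g₁ ≤ g₂` pointwise. -/
def cle (c d : (B → L) × (A → L)) : Prop := c.1 ≤ d.1

variable (C : FCAContext L I A B)

/-- The derivation operator `↑` on fuzzy sets of objects:
`g↑(a) = ⨅_b R(a,b) ↙^{σ(a,b)} g(b)`. -/
def up (g : B → L) : A → L := fun a => ⨅ b, C.limp (C.sig a b) (C.R a b) (g b)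

/-- The derivation operator `↓` on fuzzy sets of attributes:
`f↓(b) = ⨅_a R(a,b) ↖_{σ(a,b)} f(a)`. -/
def down (f : A → L) : B → L := fun b => ⨅ a, C.rimp (C.sig a b) (C.R a b) (f a)

/-- The concept lattice `M`: pairs `⟨g, f⟩` with `g↑ = f` and `f↓ = g`. -/
def concepts : Set ((B → L) × (A → L)) :=
  {c | C.up c.1 = c.2 ∧ C.down c.2 = c.1}

/-- The pair `⟨φ_{a,x}↓, φ_{a,x}↓↑⟩` generated by a fuzzy-attribute. -/
noncomputable def attrConcept (a : A) (x : L) : (B → L) × (A → L) :=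
  (C.down (phiA a x), C.up (C.down (phiA a x)))

/-- The pair `⟨φ_{b,y}↑↓, φ_{b,y}↑⟩` generated by a fuzzy-object. -/
noncomputable def objConcept (b : B) (y : L) : (B → L) × (A → L) :=
  (C.down (C.up (phiB b y)), C.up (phiB b y))

/-- A context is *normalized* when every attribute is related to some object with a
non-bottom value and to some object with the bottom value, and symmetrically for
objects. -/
def Normalized : Prop :=
  (∀ a : A, ∃ b : B, C.R a b ≠ ⊥) ∧ (∀ a : A, ∃ b : B, C.R a b = ⊥) ∧
  (∀ b : B, ∃ a : A, C.R a b ≠ ⊥) ∧ (∀ b : B, ∃ a : A, C.R a b = ⊥)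

/-- The conjunctor associated with the index `i` has no zero-divisors. -/
def NoZeroDiv (i : I) : Prop :=
  ∀ x y : L, x ≠ ⊥ → y ≠ ⊥ → C.conj i x y ≠ ⊥

/-- `(Y, X)` is a *separable subcontext* of the context. -/
def SeparableSubcontext (Y : Set A) (X : Set B) : Prop :=
  Y.Nonempty ∧ X.Nonempty ∧ Y ≠ Set.univ ∧ X ≠ Set.univ ∧
  (∃ a ∈ Y, ∃ b ∈ X, C.R a b ≠ ⊥) ∧
  (∀ a ∈ Y, ∀ b ∉ X, C.R a b = ⊥) ∧
  (∀ a ∉ Y, ∀ b ∈ X, C.R a b = ⊥)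

/-- A family `{(Afam l, Bfam l)}_{l : Λ}` is a *decomposition into independent
subcontexts* of the context. -/
def SubcontextDecomposition {Λ : Type*} (Afam : Λ → Set A) (Bfam : Λ → Set B) : Prop :=
  Nonempty Λ ∧
  (∀ l, C.SeparableSubcontext (Afam l) (Bfam l)) ∧
  (∀ l m, l ≠ m → Disjoint (Afam l) (Afam m)) ∧
  (∀ l m, l ≠ m → Disjoint (Bfam l) (Bfam m)) ∧
  (⋃ l, Afam l) = Set.univ ∧ (⋃ l, Bfam l) = Set.univ ∧
  (∀ l, ∀ a ∉ Afam l, ∀ b ∈ Bfam l, C.NoZeroDiv (C.sig a b)) ∧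
  (∀ l, ∀ a ∈ Afam l, ∀ b ∉ Bfam l, C.NoZeroDiv (C.sig a b))

/-- The meet of two concepts in the concept lattice: the extent is the pointwise
infimum of the extents. -/
def cmeet (c d : (B → L) × (A → L)) : (B → L) × (A → L) :=
  (c.1 ⊓ d.1, C.up (c.1 ⊓ d.1))

/-- The join of two concepts in the concept lattice: the intent is the pointwise
infimum of the intents. -/
def cjoin (c d : (B → L) × (A → L)) : (B → L) × (A → L) :=
  (C.down (c.2 ⊓ d.2), c.2 ⊓ d.2)

/-- A concept is *meet-irreducible* in the concept lattice `M` if it is not the top of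
`M` (its extent is not `g_⊤`) and whenever it is the meet of two concepts it equals one
of them. -/
def MeetIrred (m : (B → L) × (A → L)) : Prop :=
  m ∈ C.concepts ∧ m.1 ≠ (fun _ => (⊤ : L)) ∧
  ∀ c d, c ∈ C.concepts → d ∈ C.concepts → m.1 = c.1 ⊓ d.1 → m = c ∨ m = d

/-- `M_F^{A'}`: the meet-irreducible concepts generated by fuzzy-attributes with
attribute in `A'`. -/
noncomputable def MF (A' : Set A) : Set ((B → L) × (A → L)) :=
  {m | C.MeetIrred m ∧ ∃ a ∈ A', ∃ x : L, m = C.attrConcept a x}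

/-- `M_g^{A'}`: the elements of `M_F^{A'}` above the concept with extent `g`. -/
noncomputable def Mg (g : B → L) (A' : Set A) : Set ((B → L) × (A → L)) :=
  {m ∈ C.MF A' | g ≤ m.1}

/-- The concept lattice satisfies the ascending chain condition. -/
def ACC : Prop :=
  ∀ c : ℕ → (B → L) × (A → L), (∀ n, c n ∈ C.concepts) →
    (∀ n, cle (c n) (c (n + 1))) → ∃ n, ∀ m, n ≤ m → c m = c n

/-- `K` is a *block of concepts* of the concept lattice `M`: a sublattice of `M`,
different from `M`, containing some concept other than the top `⟨g_⊤,f_⊥⟩` and the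
bottom `⟨g_⊥,f_⊤⟩`, and closed under comparability except for the top and the bottom. -/
def IsBlockM (K : Set ((B → L) × (A → L))) : Prop :=
  K ⊆ C.concepts ∧ K ≠ C.concepts ∧
  (K \ ({topC, botC} : Set ((B → L) × (A → L)))).Nonempty ∧
  (∀ c ∈ K, ∀ d ∈ K, C.cmeet c d ∈ K ∧ C.cjoin c d ∈ K) ∧
  ∀ k ∈ K \ ({topC, botC} : Set ((B → L) × (A → L))), ∀ c ∈ C.concepts,
    (cle k c ∨ cle c k) →
    c ∉ ({topC, botC} : Set ((B → L) × (A → L))) → c ∈ K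

/-- A complete block of concepts: a block containing the top and the bottom of `M`. -/
def IsCompleteBlockM (K : Set ((B → L) × (A → L))) : Prop :=
  C.IsBlockM K ∧ topC ∈ K ∧ botC ∈ K

/-- A family `{K l}_{l : Λ}` is a *decomposition into independent blocks* of the
concept lattice `M`. -/
def BlockDecomposition {Λ : Type*} (K : Λ → Set ((B → L) × (A → L))) : Prop :=
  Nonempty Λ ∧ (∀ l, C.IsBlockM (K l)) ∧
  (∀ l m, l ≠ m → K l ∩ K m ⊆ ({topC, botC} : Set ((B → L) × (A → L)))) ∧
  (⋃ l, K l) = C.concepts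

/-- The block of concepts `K_λ` determined by a set of attributes `A'`:
the concepts which are the infimum of `M_g^{A'}`, together with the top and the
bottom of `M`. -/
noncomputable def Kblock (A' : Set A) : Set ((B → L) × (A → L)) :=
  {c ∈ C.concepts | c.1 = ⨅ m ∈ C.Mg c.1 A', m.1} ∪
    ({topC, botC} : Set ((B → L) × (A → L)))

/-- The set of attributes `A_μ` associated with a block of concepts `K`. -/
noncomputable def Amu (K : Set ((B → L) × (A → L))) : Set A :=
  {a | ∃ x : L, C.attrConcept a x ∈
    K \ ({topC, botC} : Set ((B → L) × (A → L)))}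

/-- The set of objects `B_μ` associated with a block of concepts `K`. -/
noncomputable def Bmu (K : Set ((B → L) × (A → L))) : Set B :=
  {b | ∃ y : L, C.objConcept b y ∈
    K \ ({topC, botC} : Set ((B → L) × (A → L)))}

end FCAContext
namespace FCAContext

variable {L I A B : Type*} [CompleteLattice L] (C : FCAContext L I A B)

lemma conj_mono_right (i : I) (x : L) {y1 y2 : L} (h : y1 ≤ y2) :
    C.conj i x y1 ≤ C.conj i x y2 := by
  rw [C.adjoint_right]
  exact h.trans ((C.adjoint_right i x y2 _).mp le_rfl)

lemma conj_mono_left (i : I) {x1 x2 : L} (h : x1 ≤ x2) (y : L) :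
    C.conj i x1 y ≤ C.conj i x2 y := by
  rw [← C.adjoint_left]
  exact h.trans ((C.adjoint_left i x2 y _).mpr le_rfl)

lemma conj_bot_left (i : I) (y : L) : C.conj i ⊥ y = ⊥ :=
  le_antisymm ((C.conj_mono_right i ⊥ (le_top (a := y))).trans_eq
    (C.boundary_right i ⊥)) bot_le

lemma conj_bot_right (i : I) (x : L) : C.conj i x ⊥ = ⊥ :=
  le_antisymm ((C.conj_mono_left i (le_top (a := x)) ⊥).trans_eq
    (C.boundary_left i ⊥)) bot_le

lemma limp_bot_right (i : I) (z : L) : C.limp i z ⊥ = ⊤ :=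
  top_unique ((C.adjoint_left i ⊤ ⊥ z).mpr (by rw [C.conj_bot_right]; exact bot_le))

lemma rimp_bot_right (i : I) (z : L) : C.rimp i z ⊥ = ⊤ :=
  top_unique ((C.adjoint_right i ⊥ ⊤ z).mp (by rw [C.conj_bot_left]; exact bot_le))

lemma limp_top_right (i : I) (z : L) : C.limp i z ⊤ = z := by
  apply le_antisymm
  · have := (C.adjoint_left i (C.limp i z ⊤) ⊤ z).mp le_rfl
    rwa [C.boundary_right] at this
  · exact (C.adjoint_left i z ⊤ z).mpr (by rw [C.boundary_right])

lemma rimp_top_right (i : I) (z : L) : C.rimp i z ⊤ = z := by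
  apply le_antisymm
  · have := (C.adjoint_right i ⊤ (C.rimp i z ⊤) z).mpr le_rfl
    rwa [C.boundary_left] at this
  · exact (C.adjoint_right i ⊤ z z).mp (by rw [C.boundary_left])

lemma limp_anti (i : I) (z : L) {y1 y2 : L} (h : y1 ≤ y2) :
    C.limp i z y2 ≤ C.limp i z y1 :=
  (C.adjoint_left i _ y1 z).mpr ((C.conj_mono_right i _ h).trans
    ((C.adjoint_left i _ y2 z).mp le_rfl))

lemma rimp_anti (i : I) (z : L) {x1 x2 : L} (h : x1 ≤ x2) :
    C.rimp i z x2 ≤ C.rimp i z x1 :=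
  (C.adjoint_right i x1 _ z).mp ((C.conj_mono_left i h _).trans
    ((C.adjoint_right i x2 _ z).mpr le_rfl))

lemma up_anti {g1 g2 : B → L} (h : g1 ≤ g2) : C.up g2 ≤ C.up g1 :=
  fun a => le_iInf fun b => (iInf_le _ b).trans (C.limp_anti _ _ (h b))

lemma down_anti {f1 f2 : A → L} (h : f1 ≤ f2) : C.down f2 ≤ C.down f1 :=
  fun b => le_iInf fun a => (iInf_le _ a).trans (C.rimp_anti _ _ (h a))

lemma le_up_down (f : A → L) : f ≤ C.up (C.down f) := fun a =>
  le_iInf fun b => (C.adjoint_left _ _ _ _).mpr <|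
    (C.adjoint_right _ _ _ _).mpr (iInf_le _ a)

lemma le_down_up (g : B → L) : g ≤ C.down (C.up g) := fun b =>
  le_iInf fun a => (C.adjoint_right _ _ _ _).mp <|
    (C.adjoint_left _ _ _ _).mp (iInf_le _ b)

lemma down_up_down (f : A → L) : C.down (C.up (C.down f)) = C.down f :=
  le_antisymm (C.down_anti (C.le_up_down f)) (C.le_down_up (C.down f))

lemma up_down_up (g : B → L) : C.up (C.down (C.up g)) = C.up g :=
  le_antisymm (C.up_anti (C.le_down_up g)) (C.le_up_down (C.up g))

lemma attrConcept_mem (a : A) (x : L) : C.attrConcept a x ∈ C.concepts :=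
  ⟨rfl, C.down_up_down _⟩

lemma objConcept_mem (b : B) (y : L) : C.objConcept b y ∈ C.concepts :=
  ⟨C.up_down_up _, rfl⟩

lemma down_phiA (a : A) (x : L) (b : B) :
    C.down (phiA a x) b = C.rimp (C.sig a b) (C.R a b) x := by
  apply le_antisymm
  · exact (iInf_le _ a).trans_eq (by simp [phiA])
  · refine le_iInf fun a' => ?_
    by_cases h : a' = a
    · subst h; simp [phiA]
    · simp [phiA, h, C.rimp_bot_right]

lemma up_phiB (b : B) (y : L) (a : A) :
    C.up (phiB b y) a = C.limp (C.sig a b) (C.R a b) y := by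
  apply le_antisymm
  · exact (iInf_le _ b).trans_eq (by simp [phiB])
  · refine le_iInf fun b' => ?_
    by_cases h : b' = b
    · subst h; simp [phiB]
    · simp [phiB, h, C.limp_bot_right]

end FCAContext
namespace FCAContext

variable {L I A B : Type*} [CompleteLattice L] (C : FCAContext L I A B)

lemma up_const_top (hn : C.Normalized) :
    C.up (fun _ => ⊤) = fun _ => (⊥ : L) := by
  funext a
  obtain ⟨b, hb⟩ := hn.2.1 a
  refine le_antisymm ((iInf_le _ b).trans_eq (by rw [C.limp_top_right, hb])) bot_le

lemma down_const_top (hn : C.Normalized) :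
    C.down (fun _ => ⊤) = fun _ => (⊥ : L) := by
  funext b
  obtain ⟨a, ha⟩ := hn.2.2.2 b
  refine le_antisymm ((iInf_le _ a).trans_eq (by rw [C.rimp_top_right, ha])) bot_le

lemma up_const_bot : C.up (fun _ => ⊥) = fun _ => (⊤ : L) := by
  funext a; exact top_unique (le_iInf fun b => by rw [C.limp_bot_right])

lemma down_const_bot : C.down (fun _ => ⊥) = fun _ => (⊤ : L) := by
  funext b; exact top_unique (le_iInf fun a => by rw [C.rimp_bot_right])

lemma topC_mem (hn : C.Normalized) : (topC : (B → L) × (A → L)) ∈ C.concepts :=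
  ⟨C.up_const_top hn, C.down_const_bot⟩

lemma botC_mem (hn : C.Normalized) : (botC : (B → L) × (A → L)) ∈ C.concepts :=
  ⟨C.up_const_bot, C.down_const_top hn⟩

lemma concept_ext {c d : (B → L) × (A → L)} (hc : c ∈ C.concepts)
    (hd : d ∈ C.concepts) (h : c.1 = d.1) : c = d := by
  obtain ⟨c1, c2⟩ := c; obtain ⟨d1, d2⟩ := d
  simp only at h; subst h
  simp only [Prod.mk.injEq, true_and]
  exact (hc.1.symm.trans hd.1 : _)

lemma eq_botC_iff {c : (B → L) × (A → L)} (hc : c ∈ C.concepts)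
    (hn : C.Normalized) : c = botC ↔ c.1 = fun _ => (⊥ : L) := by
  constructor
  · intro h; rw [h]; rfl
  · intro h; exact C.concept_ext hc (C.botC_mem hn) h

lemma eq_topC_iff {c : (B → L) × (A → L)} (hc : c ∈ C.concepts)
    (hn : C.Normalized) : c = topC ↔ c.1 = fun _ => (⊤ : L) := by
  constructor
  · intro h; rw [h]; rfl
  · intro h; exact C.concept_ext hc (C.topC_mem hn) h

lemma bot_ne_top [Nonempty A] (hn : C.Normalized) : (⊥ : L) ≠ ⊤ := by
  intro h
  obtain ⟨b, hb⟩ := hn.1 (Classical.arbitrary A)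
  exact hb (le_antisymm (le_top.trans_eq h.symm) bot_le)

lemma phiA_bot' (a : A) : phiA a (⊥ : L) = fun _ => (⊥ : L) := by
  funext a'; simp [phiA]

lemma attrConcept_bot (hn : C.Normalized) (a : A) :
    C.attrConcept a (⊥ : L) = topC := by
  unfold attrConcept
  rw [phiA_bot', C.down_const_bot, C.up_const_top hn]; rfl

/-- Extent of the attribute concept generated by `φ_{a,⊤}` is the row `R a ·`. -/
lemma attrConcept_top_fst (a : A) :
    (C.attrConcept a (⊤ : L)).1 = fun b => C.R a b := by
  funext b
  rw [attrConcept]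
  simp only
  rw [C.down_phiA, C.rimp_top_right]

/-- Intent of the object concept generated by `φ_{b,⊤}` is the column `R · b`. -/
lemma objConcept_top_snd (b : B) :
    (C.objConcept b (⊤ : L)).2 = fun a => C.R a b := by
  funext a
  rw [objConcept]
  simp only
  rw [C.up_phiB, C.limp_top_right]

/-- The intent of `attrConcept a x` dominates `x` at `a`. -/
lemma attrConcept_snd_ge (a : A) (x : L) : x ≤ (C.attrConcept a x).2 a := by
  have := C.le_up_down (phiA a x) a
  simpa [phiA, attrConcept] using this

/-- The extent of `objConcept b y` dominates `y` at `b`. -/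
lemma objConcept_fst_ge (b : B) (y : L) : y ≤ (C.objConcept b y).1 b := by
  have := C.le_down_up (phiB b y) b
  simpa [phiB, objConcept] using this

lemma attrConcept_ne_top (a : A) {x : L} (hx : x ≠ ⊥) :
    C.attrConcept a x ≠ topC := by
  intro h
  have h2 : (C.attrConcept a x).2 a = (⊥ : L) := by rw [h]; rfl
  exact hx (le_antisymm ((C.attrConcept_snd_ge a x).trans_eq h2) bot_le)

lemma attrConcept_anti (a : A) {x x' : L} (h : x ≤ x') :
    (C.attrConcept a x').1 ≤ (C.attrConcept a x).1 := by
  refine C.down_anti fun a' => ?_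
  by_cases ha : a' = a <;> simp [phiA, ha, h]

lemma objConcept_mono (b : B) {y y' : L} (h : y ≤ y') :
    (C.objConcept b y).1 ≤ (C.objConcept b y').1 := by
  refine C.down_anti (C.up_anti fun b' => ?_)
  by_cases hb : b' = b <;> simp [phiB, hb, h]

end FCAContext
namespace FCAContext

variable {L I A B : Type*} [CompleteLattice L] (C : FCAContext L I A B)

lemma not_mem_pair {c : (B → L) × (A → L)} (h1 : c ≠ topC) (h2 : c ≠ botC) :
    c ∉ ({topC, botC} : Set ((B → L) × (A → L))) := by
  simp [h1, h2]

lemma zeta_not_tb [Nonempty A] (hn : C.Normalized) (a : A) :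
    C.attrConcept a (⊤ : L) ∉ ({topC, botC} : Set ((B → L) × (A → L))) := by
  refine not_mem_pair (C.attrConcept_ne_top a (C.bot_ne_top hn).symm) ?_
  intro h
  obtain ⟨b, hb⟩ := hn.1 a
  have := congrFun (congrArg Prod.fst h) b
  rw [C.attrConcept_top_fst] at this
  exact hb this

lemma eta_not_tb [Nonempty A] (hn : C.Normalized) (b : B) :
    C.objConcept b (⊤ : L) ∉ ({topC, botC} : Set ((B → L) × (A → L))) := by
  refine not_mem_pair ?_ ?_
  · intro h
    obtain ⟨a, ha⟩ := hn.2.2.1 b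
    have := congrFun (congrArg Prod.snd h) a
    rw [C.objConcept_top_snd] at this
    exact ha this
  · intro h
    obtain ⟨a, ha⟩ := hn.2.2.2 b
    have := congrFun (congrArg Prod.snd h) a
    rw [C.objConcept_top_snd] at this
    exact C.bot_ne_top hn (ha ▸ this)

lemma mem_Amu_iff [Nonempty A] (hn : C.Normalized)
    {KK : Set ((B → L) × (A → L))} (hb : C.IsBlockM KK) (a : A) :
    a ∈ C.Amu KK ↔ C.attrConcept a (⊤ : L) ∈ KK := by
  constructor
  · rintro ⟨x, hx⟩
    exact hb.2.2.2.2 _ hx _ (C.attrConcept_mem a ⊤)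
      (Or.inr (C.attrConcept_anti a le_top)) (C.zeta_not_tb hn a)
  · intro h
    exact ⟨⊤, h, C.zeta_not_tb hn a⟩

lemma mem_Bmu_iff [Nonempty A] (hn : C.Normalized)
    {KK : Set ((B → L) × (A → L))} (hb : C.IsBlockM KK) (b : B) :
    b ∈ C.Bmu KK ↔ C.objConcept b (⊤ : L) ∈ KK := by
  constructor
  · rintro ⟨y, hy⟩
    exact hb.2.2.2.2 _ hy _ (C.objConcept_mem b ⊤)
      (Or.inl (C.objConcept_mono b le_top)) (C.eta_not_tb hn b)
  · intro h
    exact ⟨⊤, h, C.eta_not_tb hn b⟩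

lemma mem_Bmu_of [Nonempty A] (hn : C.Normalized)
    {KK : Set ((B → L) × (A → L))} (hb : C.IsBlockM KK) {a : A} {b : B}
    (ha : a ∈ C.Amu KK) (hR : C.R a b ≠ ⊥) : b ∈ C.Bmu KK := by
  have hz : C.attrConcept a (⊤ : L) ∈ KK := (C.mem_Amu_iff hn hb a).mp ha
  set o := C.objConcept b (C.R a b) with ho
  have hphi : phiB b (C.R a b) ≤ (C.attrConcept a (⊤ : L)).1 := by
    intro b'
    rw [C.attrConcept_top_fst]
    by_cases h : b' = b
    · subst h; simp [phiB]
    · simp [phiB, h]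
  have hle : o.1 ≤ (C.attrConcept a (⊤ : L)).1 := by
    calc o.1 = C.down (C.up (phiB b (C.R a b))) := rfl
    _ ≤ C.down (C.up (C.attrConcept a (⊤ : L)).1) := C.down_anti (C.up_anti hphi)
    _ = C.down (C.attrConcept a (⊤ : L)).2 := by rw [(C.attrConcept_mem a ⊤).1]
    _ = (C.attrConcept a (⊤ : L)).1 := (C.attrConcept_mem a ⊤).2
  have hnt : o ≠ topC := by
    intro h
    rw [C.eq_topC_iff (C.objConcept_mem _ _) hn] at h
    obtain ⟨b0, hb0⟩ := hn.2.1 a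
    have h1 : (⊤ : L) ≤ (C.attrConcept a (⊤ : L)).1 b0 := by
      have := hle b0; rw [h] at this; exact this
    rw [C.attrConcept_top_fst] at h1
    have h2 : (⊤ : L) ≤ ⊥ := by simpa [hb0] using h1
    exact C.bot_ne_top hn (le_bot_iff.mp h2).symm
  have hnb : o ≠ botC := by
    intro h
    rw [C.eq_botC_iff (C.objConcept_mem _ _) hn] at h
    have := C.objConcept_fst_ge b (C.R a b)
    rw [h] at this
    exact hR (le_bot_iff.mp this)
  refine ⟨C.R a b, hb.2.2.2.2 _ ⟨hz, C.zeta_not_tb hn a⟩ _ (C.objConcept_mem _ _)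
    (Or.inr hle) (not_mem_pair hnt hnb), not_mem_pair hnt hnb⟩

lemma mem_Amu_of [Nonempty A] (hn : C.Normalized)
    {KK : Set ((B → L) × (A → L))} (hb : C.IsBlockM KK) {a : A} {b : B}
    (hbm : b ∈ C.Bmu KK) (hR : C.R a b ≠ ⊥) : a ∈ C.Amu KK := by
  have he : C.objConcept b (⊤ : L) ∈ KK := (C.mem_Bmu_iff hn hb b).mp hbm
  set t := C.attrConcept a (C.R a b) with ht
  have hphi : phiA a (C.R a b) ≤ (C.objConcept b (⊤ : L)).2 := by
    intro a'
    rw [C.objConcept_top_snd]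
    by_cases h : a' = a
    · subst h; simp [phiA]
    · simp [phiA, h]
  have hle : (C.objConcept b (⊤ : L)).1 ≤ t.1 := by
    calc (C.objConcept b (⊤ : L)).1 = C.down (C.objConcept b (⊤ : L)).2 := rfl
    _ ≤ C.down (phiA a (C.R a b)) := C.down_anti hphi
    _ = t.1 := rfl
  have hnt : t ≠ topC := C.attrConcept_ne_top a hR
  have hnb : t ≠ botC := by
    intro h
    rw [C.eq_botC_iff (C.attrConcept_mem _ _) hn] at h
    have h2 : (C.objConcept b (⊤ : L)).1 = fun _ => (⊥ : L) := by
      funext b'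
      exact le_bot_iff.mp ((hle b').trans_eq (congrFun h b'))
    have h3 : C.objConcept b (⊤ : L) = botC :=
      (C.eq_botC_iff (C.objConcept_mem _ _) hn).mpr h2
    exact C.eta_not_tb hn b (by simp [h3])
  refine ⟨C.R a b, hb.2.2.2.2 _ ⟨he, C.eta_not_tb hn b⟩ _ (C.attrConcept_mem _ _)
    (Or.inl hle) (not_mem_pair hnt hnb), not_mem_pair hnt hnb⟩

end FCAContext
namespace FCAContext

variable {L I A B : Type*} [CompleteLattice L] (C : FCAContext L I A B)

lemma Amu_nonempty [Nonempty A] (hn : C.Normalized)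
    {KK : Set ((B → L) × (A → L))} (hb : C.IsBlockM KK) :
    (C.Amu KK).Nonempty := by
  obtain ⟨c, hcK, hcnot⟩ := hb.2.2.1
  have hc : c ∈ C.concepts := hb.1 hcK
  have hcnt : c ≠ topC := fun h => hcnot (by simp [h])
  have hcnb : c ≠ botC := fun h => hcnot (by simp [h])
  have hex : ∃ a, c.2 a ≠ ⊥ := by
    by_contra h
    push_neg at h
    have h2 : c.2 = fun _ => (⊥ : L) := funext h
    apply hcnt
    rw [C.eq_topC_iff hc hn, ← hc.2, h2, C.down_const_bot]
  obtain ⟨a, ha⟩ := hex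
  set t := C.attrConcept a (c.2 a) with htdef
  have hphi : phiA a (c.2 a) ≤ c.2 := by
    intro a'
    by_cases h : a' = a
    · subst h; simp [phiA]
    · simp [phiA, h]
  have hle : c.1 ≤ t.1 := by
    calc c.1 = C.down c.2 := hc.2.symm
    _ ≤ C.down (phiA a (c.2 a)) := C.down_anti hphi
    _ = t.1 := rfl
  have hnt : t ≠ topC := C.attrConcept_ne_top a ha
  have hnb : t ≠ botC := by
    intro h
    rw [C.eq_botC_iff (C.attrConcept_mem _ _) hn] at h
    apply hcnb
    rw [C.eq_botC_iff hc hn]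
    funext b'
    exact le_bot_iff.mp ((hle b').trans_eq (congrFun h b'))
  exact ⟨a, c.2 a, hb.2.2.2.2 _ ⟨hcK, hcnot⟩ _ (C.attrConcept_mem _ _)
    (Or.inl hle) (not_mem_pair hnt hnb), not_mem_pair hnt hnb⟩

lemma Bmu_nonempty [Nonempty A] (hn : C.Normalized)
    {KK : Set ((B → L) × (A → L))} (hb : C.IsBlockM KK) :
    (C.Bmu KK).Nonempty := by
  obtain ⟨c, hcK, hcnot⟩ := hb.2.2.1
  have hc : c ∈ C.concepts := hb.1 hcK
  have hcnt : c ≠ topC := fun h => hcnot (by simp [h])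
  have hcnb : c ≠ botC := fun h => hcnot (by simp [h])
  have hex : ∃ b, c.1 b ≠ ⊥ := by
    by_contra h
    push_neg at h
    exact hcnb ((C.eq_botC_iff hc hn).mpr (funext h))
  obtain ⟨b, hbb⟩ := hex
  set o := C.objConcept b (c.1 b) with hodef
  have hphi : phiB b (c.1 b) ≤ c.1 := by
    intro b'
    by_cases h : b' = b
    · subst h; simp [phiB]
    · simp [phiB, h]
  have hle : o.1 ≤ c.1 := by
    calc o.1 = C.down (C.up (phiB b (c.1 b))) := rfl
    _ ≤ C.down (C.up c.1) := C.down_anti (C.up_anti hphi)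
    _ = C.down c.2 := by rw [hc.1]
    _ = c.1 := hc.2
  have hnb : o ≠ botC := by
    intro h
    rw [C.eq_botC_iff (C.objConcept_mem _ _) hn] at h
    have := C.objConcept_fst_ge b (c.1 b)
    rw [← hodef, h] at this
    exact hbb (le_bot_iff.mp this)
  have hnt : o ≠ topC := by
    intro h
    rw [C.eq_topC_iff (C.objConcept_mem _ _) hn] at h
    apply hcnt
    rw [C.eq_topC_iff hc hn]
    funext b'
    exact top_unique ((congrFun h b').symm.trans_le (hle b'))
  exact ⟨b, c.1 b, hb.2.2.2.2 _ ⟨hcK, hcnot⟩ _ (C.objConcept_mem _ _)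
    (Or.inr hle) (not_mem_pair hnt hnb), not_mem_pair hnt hnb⟩

end FCAContext

/-- Let `(A,B,R,σ)` be a normalized context whose concept lattice has
a decomposition into independent blocks `{K μ}`, with associated attribute sets `A_μ`
and object sets `B_μ`. Then for every `μ`, the pair `(A_μ, B_μ)` is a separable
subcontext of `(A,B,R,σ)`. -/
theorem FCAContext.Amu_Bmu_separable_subcontext
    {L I A B : Type*} [CompleteLattice L] [Finite I] [Nonempty I]
    [Nonempty A] [Nonempty B] (C : FCAContext L I A B)
    (hn : C.Normalized)
    {Λ : Type*} (K : Λ → Set ((B → L) × (A → L)))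
    (hdec : C.BlockDecomposition K) :
    ∀ μ, C.SeparableSubcontext (C.Amu (K μ)) (C.Bmu (K μ)) := by
  intro μ
  have hbμ := hdec.2.1 μ
  -- find another block ν ≠ μ
  obtain ⟨c0, hc0, hc0n⟩ : ∃ c0 ∈ C.concepts, c0 ∉ K μ := by
    by_contra h
    push_neg at h
    exact hbμ.2.1 (le_antisymm hbμ.1 h)
  obtain ⟨ν, hc0ν⟩ : ∃ ν, c0 ∈ K ν := by
    have := hdec.2.2.2.symm ▸ hc0
    simpa using this
  have hνμ : ν ≠ μ := fun h => hc0n (h ▸ hc0ν)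
  have hbν := hdec.2.1 ν
  refine ⟨C.Amu_nonempty hn hbμ, C.Bmu_nonempty hn hbμ, ?_, ?_, ?_, ?_, ?_⟩
  · -- Amu ≠ univ
    obtain ⟨a', ha'⟩ := C.Amu_nonempty hn hbν
    intro h
    have haμ : a' ∈ C.Amu (K μ) := h ▸ Set.mem_univ a'
    have h1 := (C.mem_Amu_iff hn hbμ a').mp haμ
    have h2 := (C.mem_Amu_iff hn hbν a').mp ha'
    exact C.zeta_not_tb hn a' (hdec.2.2.1 μ ν hνμ.symm ⟨h1, h2⟩)
  · -- Bmu ≠ univ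
    obtain ⟨b', hb'⟩ := C.Bmu_nonempty hn hbν
    intro h
    have hbμ' : b' ∈ C.Bmu (K μ) := h ▸ Set.mem_univ b'
    have h1 := (C.mem_Bmu_iff hn hbμ b').mp hbμ'
    have h2 := (C.mem_Bmu_iff hn hbν b').mp hb'
    exact C.eta_not_tb hn b' (hdec.2.2.1 μ ν hνμ.symm ⟨h1, h2⟩)
  · -- existence of a related pair
    obtain ⟨a, ha⟩ := C.Amu_nonempty hn hbμ
    obtain ⟨b, hR⟩ := hn.1 a
    exact ⟨a, ha, b, C.mem_Bmu_of hn hbμ ha hR, hR⟩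
  · -- a ∈ Amu, b ∉ Bmu → R a b = ⊥
    intro a ha b hb
    by_contra hR
    exact hb (C.mem_Bmu_of hn hbμ ha hR)
  · -- a ∉ Amu, b ∈ Bmu → R a b = ⊥
    intro a ha b hb
    by_contra hR
    exact ha (C.mem_Amu_of hn hbμ hb hR)
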